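/- Let r ∈ ℝ with r ≠ 0. There is a 5-dimensional real Lie algebra 𝔤 with basis e₁,...,e₅ and dual basis e¹,...,e⁵ whose Chevalley–Eilenberg differentials satisfy (writing e^{ij} for eⁱ∧eʲ): de¹ = 0, de² = r e^{12}, de³ = r e^{13}, de⁴ = −r e^{14} − 3r² e^{15} + 2r e^{23}, de⁵ = −2e^{14} − 2e^{23} (i.e., the bracket determined by these equations satisfies the Jacobi identity). Moreover, 𝔤 is solvable, the quadruplet η = e⁵, ω₁ = e^{12} + e^{34}, ω₂ = e^{13} − e^{24}, ω₃ = e^{14} + e^{23} is a hypo-contact structure on 𝔤, and 𝔤 is isomorphic to 𝔥₂. -/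

import Mathlib

noncomputable section

/-- Chevalley–Eilenberg differential of a 1-form on a Lie algebra. -/
def dOne {V : Type*} [LieRing V] [LieAlgebra ℝ V] (α : V → ℝ) (x y : V) : ℝ :=
  -α ⁅x, y⁆

/-- Chevalley–Eilenberg differential of a 2-form on a Lie algebra. -/
def dTwo {V : Type*} [LieRing V] [LieAlgebra ℝ V] (ω : V → V → ℝ) (x y z : V) : ℝ :=
  -ω ⁅x, y⁆ z + ω ⁅x, z⁆ y - ω ⁅y, z⁆ x

/-- Chevalley–Eilenberg differential of a 3-form on a Lie algebra. -/
def dThree {V : Type*} [LieRing V] [LieAlgebra ℝ V] (σ : V → V → V → ℝ)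
    (x y z w : V) : ℝ :=
  -σ ⁅x, y⁆ z w + σ ⁅x, z⁆ y w - σ ⁅x, w⁆ y z
    - σ ⁅y, z⁆ x w + σ ⁅y, w⁆ x z - σ ⁅z, w⁆ x y

/-- Wedge product of two 1-forms, as an alternating bilinear map. -/
def wedge1 {V : Type*} [LieRing V] [LieAlgebra ℝ V] (α β : V →ₗ[ℝ] ℝ) :
    V →ₗ[ℝ] V →ₗ[ℝ] ℝ :=
  LinearMap.mk₂ ℝ (fun x y => α x * β y - α y * β x)
    (fun m₁ m₂ n => by simp [map_add]; ring)
    (fun c m n => by simp [map_smul, smul_eq_mul]; ring)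
    (fun m n₁ n₂ => by simp [map_add]; ring)
    (fun c m n => by simp [map_smul, smul_eq_mul]; ring)

/-- Wedge product of a 1-form and a 2-form. -/
def wedge12 {V : Type*} (α : V → ℝ) (ω : V → V → ℝ) (x y z : V) : ℝ :=
  α x * ω y z - α y * ω x z + α z * ω x y

/-- Wedge product of two 2-forms. -/
def wedge22 {V : Type*} (ω τ : V → V → ℝ) (x y z w : V) : ℝ :=
  ω x y * τ z w - ω x z * τ y w + ω x w * τ y z
    + ω y z * τ x w - ω y w * τ x z + ω z w * τ x y

/-- Wedge product of a 4-form and a 1-form. -/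
def wedge41 {V : Type*} (v : V → V → V → V → ℝ) (α : V → ℝ)
    (x₀ x₁ x₂ x₃ x₄ : V) : ℝ :=
  α x₀ * v x₁ x₂ x₃ x₄ - α x₁ * v x₀ x₂ x₃ x₄ + α x₂ * v x₀ x₁ x₃ x₄
    - α x₃ * v x₀ x₁ x₂ x₄ + α x₄ * v x₀ x₁ x₂ x₃

/-- An SU(2)-structure on a 5-dimensional real Lie algebra. -/
structure IsSU2Structure {V : Type*} [LieRing V] [LieAlgebra ℝ V]
    (η : V →ₗ[ℝ] ℝ) (ω₁ ω₂ ω₃ : V →ₗ[ℝ] V →ₗ[ℝ] ℝ) : Prop where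
  alt1 : ∀ x, ω₁ x x = 0
  alt2 : ∀ x, ω₂ x x = 0
  alt3 : ∀ x, ω₃ x x = 0
  vol : ∃ v : V → V → V → V → ℝ,
    wedge22 (fun a b => ω₁ a b) (fun a b => ω₁ a b) = v ∧
    wedge22 (fun a b => ω₂ a b) (fun a b => ω₂ a b) = v ∧
    wedge22 (fun a b => ω₃ a b) (fun a b => ω₃ a b) = v ∧
    wedge22 (fun a b => ω₁ a b) (fun a b => ω₂ a b) = (fun _ _ _ _ => 0) ∧
    wedge22 (fun a b => ω₁ a b) (fun a b => ω₃ a b) = (fun _ _ _ _ => 0) ∧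
    wedge22 (fun a b => ω₂ a b) (fun a b => ω₃ a b) = (fun _ _ _ _ => 0) ∧
    wedge41 v (fun x => η x) ≠ (fun _ _ _ _ _ => 0)
  compat : ∀ X Y : V, (∀ z, ω₃ X z = ω₁ Y z) → 0 ≤ ω₂ X Y

/-- A hypo-contact structure on a 5-dimensional real Lie algebra. -/
structure IsHypoContact {V : Type*} [LieRing V] [LieAlgebra ℝ V]
    (η : V →ₗ[ℝ] ℝ) (ω₁ ω₂ ω₃ : V →ₗ[ℝ] V →ₗ[ℝ] ℝ)
    extends IsSU2Structure η ω₁ ω₂ ω₃ : Prop where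
  contact : ∀ x y, dOne (fun z => η z) x y = -2 * ω₃ x y
  closed1 : ∀ x y z w, dThree (wedge12 (fun z => η z) (fun a b => ω₁ a b)) x y z w = 0
  closed2 : ∀ x y z w, dThree (wedge12 (fun z => η z) (fun a b => ω₂ a b)) x y z w = 0

/-- The Lie algebra `𝔥₁`. -/
def IsH1 (V : Type*) [LieRing V] [LieAlgebra ℝ V] : Prop :=
  ∃ X : Module.Basis (Fin 5) ℝ V,
    ⁅X 0, X 1⁆ = 0 ∧ ⁅X 0, X 2⁆ = 0 ∧ ⁅X 0, X 3⁆ = X 4 ∧ ⁅X 0, X 4⁆ = 0 ∧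
    ⁅X 1, X 2⁆ = X 4 ∧ ⁅X 1, X 3⁆ = 0 ∧ ⁅X 1, X 4⁆ = 0 ∧
    ⁅X 2, X 3⁆ = 0 ∧ ⁅X 2, X 4⁆ = 0 ∧ ⁅X 3, X 4⁆ = 0

/-- The Lie algebra `𝔥₂`. -/
def IsH2 (V : Type*) [LieRing V] [LieAlgebra ℝ V] : Prop :=
  ∃ X : Module.Basis (Fin 5) ℝ V,
    ⁅X 0, X 1⁆ = 0 ∧ ⁅X 0, X 2⁆ = 0 ∧ ⁅X 0, X 3⁆ = 0 ∧ ⁅X 0, X 4⁆ = (2 : ℝ) • X 0 ∧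
    ⁅X 1, X 2⁆ = X 0 ∧ ⁅X 1, X 3⁆ = 0 ∧ ⁅X 1, X 4⁆ = X 1 ∧
    ⁅X 2, X 3⁆ = 0 ∧ ⁅X 2, X 4⁆ = X 2 ∧ ⁅X 3, X 4⁆ = (-3 : ℝ) • X 3

/-- The Lie algebra `𝔥₃`. -/
def IsH3 (V : Type*) [LieRing V] [LieAlgebra ℝ V] : Prop :=
  ∃ X : Module.Basis (Fin 5) ℝ V,
    ⁅X 0, X 1⁆ = 0 ∧ ⁅X 0, X 2⁆ = 0 ∧ ⁅X 0, X 3⁆ = (2 : ℝ) • X 0 ∧ ⁅X 0, X 4⁆ = 0 ∧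
    ⁅X 1, X 2⁆ = X 0 ∧ ⁅X 1, X 3⁆ = X 1 ∧ ⁅X 1, X 4⁆ = -X 2 ∧
    ⁅X 2, X 3⁆ = X 2 ∧ ⁅X 2, X 4⁆ = X 1 ∧ ⁅X 3, X 4⁆ = 0

/-- The Lie algebra `𝔥₄`. -/
def IsH4 (V : Type*) [LieRing V] [LieAlgebra ℝ V] : Prop :=
  ∃ X : Module.Basis (Fin 5) ℝ V,
    ⁅X 0, X 1⁆ = 0 ∧ ⁅X 0, X 2⁆ = 0 ∧ ⁅X 0, X 3⁆ = X 0 ∧ ⁅X 0, X 4⁆ = 0 ∧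
    ⁅X 1, X 2⁆ = 0 ∧ ⁅X 1, X 3⁆ = 0 ∧ ⁅X 1, X 4⁆ = X 1 ∧
    ⁅X 2, X 3⁆ = -X 2 ∧ ⁅X 2, X 4⁆ = -X 2 ∧ ⁅X 3, X 4⁆ = 0

/-- The Lie algebra `𝔥₅`. -/
def IsH5 (V : Type*) [LieRing V] [LieAlgebra ℝ V] : Prop :=
  ∃ X : Module.Basis (Fin 5) ℝ V,
    ⁅X 0, X 1⁆ = 0 ∧ ⁅X 0, X 2⁆ = 0 ∧ ⁅X 0, X 3⁆ = 0 ∧ ⁅X 0, X 4⁆ = X 0 ∧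
    ⁅X 1, X 2⁆ = 0 ∧ ⁅X 1, X 3⁆ = X 0 ∧ ⁅X 1, X 4⁆ = 0 ∧
    ⁅X 2, X 3⁆ = X 1 ∧ ⁅X 2, X 4⁆ = -X 2 ∧ ⁅X 3, X 4⁆ = X 3

/-- `e^{ij}`, the wedge of the `i`-th and `j`-th dual basis 1-forms. -/
def bw {V : Type*} [LieRing V] [LieAlgebra ℝ V] (e : Module.Basis (Fin 5) ℝ V) (i j : Fin 5) :
    V →ₗ[ℝ] V →ₗ[ℝ] ℝ :=
  wedge1 (e.coord i) (e.coord j)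

/-- The content of Statement 3: structure equations, solvability, hypo-contact structure
and the isomorphism type, for a Lie algebra `V`. -/
def GoodLieAlgebra3 (r : ℝ) (V : Type) [LieRing V] [LieAlgebra ℝ V] : Prop :=
  LieAlgebra.IsSolvable V ∧
  ∃ e : Module.Basis (Fin 5) ℝ V,
      (∀ x y : _, dOne (⇑(e.coord 0)) x y = 0) ∧
      (∀ x y : _, dOne (⇑(e.coord 1)) x y = (r) * bw e 0 1 x y) ∧
      (∀ x y : _, dOne (⇑(e.coord 2)) x y = (r) * bw e 0 2 x y) ∧
      (∀ x y : _, dOne (⇑(e.coord 3)) x y = (-r) * bw e 0 3 x y + (-3*r^2) * bw e 0 4 x y + (2*r) * bw e 1 2 x y) ∧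
      (∀ x y : _, dOne (⇑(e.coord 4)) x y = (-2) * bw e 0 3 x y + (-2) * bw e 1 2 x y) ∧
      IsHypoContact (e.coord 4) (bw e 0 1 + bw e 2 3) (bw e 0 2 - bw e 1 3) (bw e 0 3 + bw e 1 2) ∧
      IsH2 V


/-!
The structure equations alone determine every `e`-coordinate of every bracket, so all claims
except existence hold for any Lie algebra with such a basis and become polynomial identities
in coordinates. Solvability: the derived series lies in `ker e¹`, then in
`ker e¹ ∩ ker e² ∩ ker e³`, then vanishes. Isomorphism with `𝔥₂`: the vectors
`X₁ = 2e₅ - 2r e₄, X₂ = e₂, X₃ = e₃, X₄ = 3r e₄ + 2e₅, X₅ = r⁻¹ e₁` satisfy the bracket table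
of `𝔥₂`. Existence: `ℝ⁵` with the bracket read off from the structure equations satisfies
the Jacobi identity.
-/

theorem LieAlgebra.derivedSeries_le_of_lie_mem {R L : Type*} [CommRing R] [LieRing L]
    [LieAlgebra R L] (S : ℕ → Submodule R L) (h₀ : S 0 = ⊤)
    (hS : ∀ k, ∀ x ∈ S k, ∀ y ∈ S k, ⁅x, y⁆ ∈ S (k + 1)) (k : ℕ) :
    (derivedSeries R L k).toSubmodule ≤ S k := by
  induction k with
  | zero => simp [h₀]
  | succ k ih =>
    rw [derivedSeries_def, derivedSeriesOfIdeal_succ, ← derivedSeries_def,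
      LieSubmodule.lieIdeal_oper_eq_linear_span', Submodule.span_le]
    rintro _ ⟨x, hx, y, hy, rfl⟩
    exact hS k x (ih hx) y (ih hy)

section Basis

variable {V : Type*} [LieRing V] [LieAlgebra ℝ V]

theorem bw_apply (e : Module.Basis (Fin 5) ℝ V) (i j : Fin 5) (x y : V) :
    bw e i j x y = e.coord i x * e.coord j y - e.coord i y * e.coord j x :=
  rfl

theorem isSU2Structure_standard (e : Module.Basis (Fin 5) ℝ V) :
    IsSU2Structure (e.coord 4) (bw e 0 1 + bw e 2 3) (bw e 0 2 - bw e 1 3)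
      (bw e 0 3 + bw e 1 2) := by
  constructor
  case alt1 | alt2 | alt3 =>
    intro x
    simp only [LinearMap.add_apply, LinearMap.sub_apply, bw_apply]
    ring
  case vol =>
    refine ⟨_, rfl, ?_, ?_, ?_, ?_, ?_, ?nonzero⟩
    case nonzero =>
      intro h
      have := congrArg (fun f => f (e 0) (e 1) (e 2) (e 3) (e 4)) h
      simp [wedge41, wedge22, bw_apply] at this
    all_goals
      funext x y z w
      simp only [wedge22, LinearMap.add_apply, LinearMap.sub_apply, bw_apply]
      ring
  case compat =>
    -- testing the hypothesis on `e 0, …, e 3` gives `ω₂ X Y = Σ (e.coord i X)²`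
    intro X Y h
    have h0 := h (e 0)
    have h1 := h (e 1)
    have h2 := h (e 2)
    have h3 := h (e 3)
    simp [bw_apply] at h0 h1 h2 h3
    simp only [LinearMap.sub_apply, bw_apply, Module.Basis.coord_apply]
    set x := e.repr X
    calc 0 ≤ x 0 ^ 2 + x 1 ^ 2 + x 2 ^ 2 + x 3 ^ 2 := by positivity
      _ = _ := by linear_combination x 0 * h3 - x 2 * h1 + x 1 * h2 + x 3 * h0

/-- Indices are 0-based: `e.coord 0` is the paper's `e¹`. -/
structure HasStructureEquations (r : ℝ) (e : Module.Basis (Fin 5) ℝ V) : Prop where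
  d_coord_zero : ∀ x y, dOne (e.coord 0) x y = 0
  d_coord_one : ∀ x y, dOne (e.coord 1) x y = r * bw e 0 1 x y
  d_coord_two : ∀ x y, dOne (e.coord 2) x y = r * bw e 0 2 x y
  d_coord_three : ∀ x y, dOne (e.coord 3) x y =
    (-r) * bw e 0 3 x y + (-3 * r ^ 2) * bw e 0 4 x y + (2 * r) * bw e 1 2 x y
  d_coord_four : ∀ x y, dOne (e.coord 4) x y = (-2) * bw e 0 3 x y + (-2) * bw e 1 2 x y

def h2Family (r : ℝ) (e : Module.Basis (Fin 5) ℝ V) : Fin 5 → V :=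
  ![(2 : ℝ) • e 4 - (2 * r) • e 3, e 1, e 2, (3 * r) • e 3 + (2 : ℝ) • e 4, r⁻¹ • e 0]

theorem linearIndependent_h2Family {r : ℝ} (hr : r ≠ 0) (e : Module.Basis (Fin 5) ℝ V) :
    LinearIndependent ℝ (h2Family r e) := by
  rw [Fintype.linearIndependent_iff]
  intro c hc
  have hcoord : ∀ k, e.coord k (∑ i, c i • h2Family r e i) = 0 := by simp [hc]
  have h0 := hcoord 0
  have h1 := hcoord 1
  have h2 := hcoord 2
  have h3 := hcoord 3
  have h4 := hcoord 4
  simp [Fin.sum_univ_five, h2Family, hr] at h0 h1 h2 h3 h4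
  have h3' : c 3 = 0 := by
    have : c 3 * r = 0 := by linear_combination (h3 + r * h4) / 5
    simpa [hr] using this
  have h0' : c 0 = 0 := by linarith
  intro i
  fin_cases i <;> assumption

def h2Basis {r : ℝ} (hr : r ≠ 0) (e : Module.Basis (Fin 5) ℝ V) : Module.Basis (Fin 5) ℝ V :=
  basisOfLinearIndependentOfCardEqFinrank (linearIndependent_h2Family hr e)
    (Module.finrank_eq_card_basis e).symm

namespace HasStructureEquations

variable {r : ℝ} {e : Module.Basis (Fin 5) ℝ V}

theorem coord_zero_lie (h : HasStructureEquations r e) (x y : V) : e.coord 0 ⁅x, y⁆ = 0 :=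
  neg_eq_zero.mp (h.d_coord_zero x y)

theorem coord_one_lie (h : HasStructureEquations r e) (x y : V) :
    e.coord 1 ⁅x, y⁆ = -r * bw e 0 1 x y := by
  linarith [h.d_coord_one x y, show dOne (e.coord 1) x y = -e.coord 1 ⁅x, y⁆ from rfl]

theorem coord_two_lie (h : HasStructureEquations r e) (x y : V) :
    e.coord 2 ⁅x, y⁆ = -r * bw e 0 2 x y := by
  linarith [h.d_coord_two x y, show dOne (e.coord 2) x y = -e.coord 2 ⁅x, y⁆ from rfl]

theorem coord_three_lie (h : HasStructureEquations r e) (x y : V) :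
    e.coord 3 ⁅x, y⁆ = r * bw e 0 3 x y + 3 * r ^ 2 * bw e 0 4 x y - 2 * r * bw e 1 2 x y := by
  linarith [h.d_coord_three x y, show dOne (e.coord 3) x y = -e.coord 3 ⁅x, y⁆ from rfl]

theorem coord_four_lie (h : HasStructureEquations r e) (x y : V) :
    e.coord 4 ⁅x, y⁆ = 2 * bw e 0 3 x y + 2 * bw e 1 2 x y := by
  linarith [h.d_coord_four x y, show dOne (e.coord 4) x y = -e.coord 4 ⁅x, y⁆ from rfl]

theorem isSolvable (h : HasStructureEquations r e) : LieAlgebra.IsSolvable V := by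
  let S : ℕ → Submodule ℝ V
    | 0 => ⊤
    | 1 => LinearMap.ker (e.coord 0)
    | 2 => LinearMap.ker (e.coord 0) ⊓ LinearMap.ker (e.coord 1) ⊓ LinearMap.ker (e.coord 2)
    | _ => ⊥
  have hS : ∀ k, ∀ x ∈ S k, ∀ y ∈ S k, ⁅x, y⁆ ∈ S (k + 1) := by
    rintro (_ | _ | _ | k) x hx y hy
    · exact h.coord_zero_lie x y
    · simp only [S, LinearMap.mem_ker] at hx hy ⊢
      simp [h.coord_zero_lie, h.coord_one_lie, h.coord_two_lie, bw_apply, hx, hy]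
    · simp only [S, Submodule.mem_inf, LinearMap.mem_ker] at hx hy
      change ⁅x, y⁆ ∈ (⊥ : Submodule ℝ V)
      rw [Submodule.mem_bot, ← e.forall_coord_eq_zero_iff]
      intro i
      fin_cases i <;> simp [h.coord_zero_lie, h.coord_one_lie, h.coord_two_lie,
        h.coord_three_lie, h.coord_four_lie, bw_apply, hx, hy]
    · simp only [S, Submodule.mem_bot] at hx ⊢
      simp [hx]
  exact LieAlgebra.IsSolvable.mk (k := 3)
    (le_bot_iff.mp (LieAlgebra.derivedSeries_le_of_lie_mem S rfl hS 3))

theorem isHypoContact (h : HasStructureEquations r e) :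
    IsHypoContact (e.coord 4) (bw e 0 1 + bw e 2 3) (bw e 0 2 - bw e 1 3)
      (bw e 0 3 + bw e 1 2) where
  toIsSU2Structure := isSU2Structure_standard e
  contact x y := by
    change dOne (e.coord 4) x y = _
    rw [h.d_coord_four]
    simp only [LinearMap.add_apply]
    ring
  closed1 x y z w := by
    simp only [dThree, wedge12, LinearMap.add_apply, bw_apply, h.coord_zero_lie,
      h.coord_one_lie, h.coord_two_lie, h.coord_three_lie, h.coord_four_lie]
    ring
  closed2 x y z w := by
    simp only [dThree, wedge12, LinearMap.sub_apply, bw_apply, h.coord_zero_lie,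
      h.coord_one_lie, h.coord_two_lie, h.coord_three_lie, h.coord_four_lie]
    ring

theorem isH2 (h : HasStructureEquations r e) (hr : r ≠ 0) : IsH2 V := by
  refine ⟨h2Basis hr e, ?_⟩
  simp only [h2Basis, coe_basisOfLinearIndependentOfCardEqFinrank]
  refine ⟨?_, ?_, ?_, ?_, ?_, ?_, ?_, ?_, ?_, ?_⟩ <;> refine e.ext_elem fun i => ?_ <;>
    change e.coord i _ = e.coord i _ <;> fin_cases i <;>
    simp only [Fin.reduceFinMk, h.coord_zero_lie, h.coord_one_lie, h.coord_two_lie,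
      h.coord_three_lie, h.coord_four_lie] <;>
    simp [h2Family, bw_apply] <;> field_simp <;> ring

end HasStructureEquations

end Basis

/-- The parameter only indexes the Lie bracket below, which shadows the pointwise (zero) bracket
of `Fin 5 → ℝ`. -/
abbrev Model (_ : ℝ) : Type := Fin 5 → ℝ

namespace Model

variable (r : ℝ)

def bracket (x y : Model r) : Model r :=
  ![0,
    -r * (x 0 * y 1 - x 1 * y 0),
    -r * (x 0 * y 2 - x 2 * y 0),
    r * (x 0 * y 3 - x 3 * y 0) + 3 * r ^ 2 * (x 0 * y 4 - x 4 * y 0)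
      - 2 * r * (x 1 * y 2 - x 2 * y 1),
    2 * (x 0 * y 3 - x 3 * y 0) + 2 * (x 1 * y 2 - x 2 * y 1)]

instance : LieRing (Model r) where
  bracket := bracket r
  add_lie x y z := by
    funext i
    fin_cases i <;> simp [bracket] <;> ring
  lie_add x y z := by
    funext i
    fin_cases i <;> simp [bracket] <;> ring
  lie_self x := by
    funext i
    fin_cases i <;> simp [bracket, mul_comm]
  leibniz_lie x y z := by
    funext i
    fin_cases i <;> simp [bracket] <;> ring

instance : LieAlgebra ℝ (Model r) where
  lie_smul c x y := by
    funext i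
    fin_cases i <;> simp [Bracket.bracket, bracket] <;> ring

theorem hasStructureEquations :
    HasStructureEquations (V := Model r) r (Pi.basisFun ℝ (Fin 5)) := by
  constructor <;> intro x y <;>
    simp only [dOne, bw_apply, Module.Basis.coord_apply, Pi.basisFun_repr, Bracket.bracket,
      bracket, Matrix.cons_val] <;>
    ring

end Model

theorem exists_good_lie_algebra3 (r : ℝ) (hr : r ≠ 0) :
    ∃ (V : Type) (i₁ : LieRing V) (i₂ : @LieAlgebra ℝ V _ i₁),
      @GoodLieAlgebra3 r V i₁ i₂ := by
  have h := Model.hasStructureEquations r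
  exact ⟨Model r, inferInstance, inferInstance, h.isSolvable, _, h.d_coord_zero, h.d_coord_one,
    h.d_coord_two, h.d_coord_three, h.d_coord_four, h.isHypoContact, h.isH2 hr⟩

end
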